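/- For system (3.8a): w_τ = 2w_{xxx} − 3z_{xxx} − 12w z_{xx} + 6z z_{xx} − 12 w_x z_x − 48 w² w_x + 12 z² w_x + 24 w z z_x + 6 z_x², z_τ = 3w_{xxx} − 4z_{xxx} − 12 w w_{xx} + 6 z w_{xx} − 12 w_x² + 6 w_x z_x − 24 z w w_x − 12 w² z_x + 24 z² z_x, the time derivative of the density (w² − z²)/2 along solutions is a total x-derivative, so ∫ (w² − z²)/2 dx is conserved. -/

import Mathlib

open MeasureTheory Filter

noncomputable def px (f : ℝ → ℝ → ℝ) : ℝ → ℝ → ℝ := fun x t => deriv (fun y => f y t) x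
noncomputable def pt (f : ℝ → ℝ → ℝ) : ℝ → ℝ → ℝ := fun x t => deriv (fun s => f x s) t

/-- Explicit flux for the density `(w² − z²)/2` of system (3.8a). -/
noncomputable def flux38a (w z : ℝ → ℝ → ℝ) : ℝ → ℝ → ℝ := fun x t =>
  12 * w x t * px w x t * z x t + 2 * w x t * px (px w) x t
    + 6 * w x t * z x t * px z x t - 3 * w x t * px (px z) x t
    + 18 * (w x t)^2 * (z x t)^2 - 12 * (w x t)^2 * px z x t - 12 * (w x t)^4
    - 6 * px w x t * (z x t)^2 + 3 * px w x t * px z x t - (px w x t)^2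
    - 3 * px (px w) x t * z x t + 4 * z x t * px (px z) x t
    - 6 * (z x t)^4 - 2 * (px z x t)^2

open scoped ContDiff in
lemma key_flux_deriv (a b : ℝ → ℝ) (ha : ContDiff ℝ (⊤ : ℕ∞) a) (hb : ContDiff ℝ (⊤ : ℕ∞) b) (x : ℝ) :
    HasDerivAt (fun y => 12 * a y * deriv a y * b y + 2 * a y * deriv (deriv a) y
      + 6 * a y * b y * deriv b y - 3 * a y * deriv (deriv b) y
      + 18 * (a y)^2 * (b y)^2 - 12 * (a y)^2 * deriv b y - 12 * (a y)^4
      - 6 * deriv a y * (b y)^2 + 3 * deriv a y * deriv b y - (deriv a y)^2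
      - 3 * deriv (deriv a) y * b y + 4 * b y * deriv (deriv b) y
      - 6 * (b y)^4 - 2 * (deriv b y)^2)
      (a x * (2 * deriv (deriv (deriv a)) x - 3 * deriv (deriv (deriv b)) x
        - 12 * a x * deriv (deriv b) x + 6 * b x * deriv (deriv b) x
        - 12 * deriv a x * deriv b x - 48 * (a x)^2 * deriv a x
        + 12 * (b x)^2 * deriv a x + 24 * a x * b x * deriv b x + 6 * (deriv b x)^2)
      - b x * (3 * deriv (deriv (deriv a)) x - 4 * deriv (deriv (deriv b)) x
        - 12 * a x * deriv (deriv a) x + 6 * b x * deriv (deriv a) x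
        - 12 * (deriv a x)^2 + 6 * deriv a x * deriv b x
        - 24 * b x * a x * deriv a x - 12 * (a x)^2 * deriv b x
        + 24 * (b x)^2 * deriv b x)) x := by
  have ha' : ContDiff ℝ ∞ a := ha.of_le (by simp)
  have hb' : ContDiff ℝ ∞ b := hb.of_le (by simp)
  have ha1 : ContDiff ℝ ∞ (deriv a) := (contDiff_infty_iff_deriv.mp ha').2
  have ha2 : ContDiff ℝ ∞ (deriv (deriv a)) := (contDiff_infty_iff_deriv.mp ha1).2
  have hb1 : ContDiff ℝ ∞ (deriv b) := (contDiff_infty_iff_deriv.mp hb').2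
  have hb2 : ContDiff ℝ ∞ (deriv (deriv b)) := (contDiff_infty_iff_deriv.mp hb1).2
  have Ha : HasDerivAt a (deriv a x) x := (ha'.differentiable (by simp) x).hasDerivAt
  have Ha1 : HasDerivAt (deriv a) (deriv (deriv a) x) x :=
    (ha1.differentiable (by simp) x).hasDerivAt
  have Ha2 : HasDerivAt (deriv (deriv a)) (deriv (deriv (deriv a)) x) x :=
    (ha2.differentiable (by simp) x).hasDerivAt
  have Hb : HasDerivAt b (deriv b x) x := (hb'.differentiable (by simp) x).hasDerivAt
  have Hb1 : HasDerivAt (deriv b) (deriv (deriv b) x) x :=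
    (hb1.differentiable (by simp) x).hasDerivAt
  have Hb2 : HasDerivAt (deriv (deriv b)) (deriv (deriv (deriv b)) x) x :=
    (hb2.differentiable (by simp) x).hasDerivAt
  have H := (((((((((((((((Ha.const_mul (12:ℝ)).mul Ha1).mul Hb).add
      ((Ha.const_mul (2:ℝ)).mul Ha2)).add
      (((Ha.const_mul (6:ℝ)).mul Hb).mul Hb1)).sub
      ((Ha.const_mul (3:ℝ)).mul Hb2)).add
      (((Ha.pow 2).const_mul (18:ℝ)).mul (Hb.pow 2))).sub
      (((Ha.pow 2).const_mul (12:ℝ)).mul Hb1)).sub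
      ((Ha.pow 4).const_mul (12:ℝ))).sub
      ((Ha1.const_mul (6:ℝ)).mul (Hb.pow 2))).add
      ((Ha1.const_mul (3:ℝ)).mul Hb1)).sub
      (Ha1.pow 2)).sub
      ((Ha2.const_mul (3:ℝ)).mul Hb)).add
      ((Hb.const_mul (4:ℝ)).mul Hb2)).sub
      ((Hb.pow 4).const_mul (6:ℝ))).sub
      ((Hb1.pow 2).const_mul (2:ℝ))
  refine H.congr_deriv ?_
  simp only [Pi.mul_apply, Pi.pow_apply]
  push_cast
  ring

/-- For system (3.8a), the time derivative of the density `(w² − z²)/2` along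
solutions is a total `x`-derivative, so `∫ (w² − z²)/2 dx` is conserved. -/
theorem conservation_38a (w z : ℝ → ℝ → ℝ)
    (hw : ContDiff ℝ (⊤ : ℕ∞) (fun p : ℝ × ℝ => w p.1 p.2))
    (hz : ContDiff ℝ (⊤ : ℕ∞) (fun p : ℝ × ℝ => z p.1 p.2))
    (heqw : ∀ x t, pt w x t =
      2 * px (px (px w)) x t - 3 * px (px (px z)) x t
        - 12 * w x t * px (px z) x t + 6 * z x t * px (px z) x t
        - 12 * px w x t * px z x t - 48 * (w x t)^2 * px w x t
        + 12 * (z x t)^2 * px w x t + 24 * w x t * z x t * px z x t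
        + 6 * (px z x t)^2)
    (heqz : ∀ x t, pt z x t =
      3 * px (px (px w)) x t - 4 * px (px (px z)) x t
        - 12 * w x t * px (px w) x t + 6 * z x t * px (px w) x t
        - 12 * (px w x t)^2 + 6 * px w x t * px z x t
        - 24 * z x t * w x t * px w x t - 12 * (w x t)^2 * px z x t
        + 24 * (z x t)^2 * px z x t)
    (hint : ∀ t, Integrable (fun x => ((w x t)^2 - (z x t)^2) / 2))
    (hint' : ∀ t, Integrable
      (fun x => pt (fun y s => ((w y s)^2 - (z y s)^2) / 2) x t))
    (hdiff : ∀ t, HasDerivAt (fun s => ∫ x, ((w x s)^2 - (z x s)^2) / 2)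
      (∫ x, pt (fun y s => ((w y s)^2 - (z y s)^2) / 2) x t) t)
    (hdecayTop : ∀ t, Tendsto (fun x => flux38a w z x t) atTop (nhds 0))
    (hdecayBot : ∀ t, Tendsto (fun x => flux38a w z x t) atBot (nhds 0)) :
    (∀ x t, pt (fun y s => ((w y s)^2 - (z y s)^2) / 2) x t = px (flux38a w z) x t)
    ∧ (∀ t, deriv (fun s => ∫ x, ((w x s)^2 - (z x s)^2) / 2) t = 0) := by
  have ha : ∀ t, ContDiff ℝ (⊤ : ℕ∞) (fun y => w y t) :=
    fun t => hw.comp (contDiff_id.prodMk contDiff_const)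
  have hb : ∀ t, ContDiff ℝ (⊤ : ℕ∞) (fun y => z y t) :=
    fun t => hz.comp (contDiff_id.prodMk contDiff_const)
  have hat : ∀ x, ContDiff ℝ (⊤ : ℕ∞) (fun s => w x s) :=
    fun x => hw.comp (contDiff_const.prodMk contDiff_id)
  have hbt : ∀ x, ContDiff ℝ (⊤ : ℕ∞) (fun s => z x s) :=
    fun x => hz.comp (contDiff_const.prodMk contDiff_id)
  -- rewriting px in terms of one-variable derivatives
  have pw1 : ∀ t (y : ℝ), px w y t = deriv (fun u => w u t) y := fun _ _ => rfl
  have pw2 : ∀ t (y : ℝ), px (px w) y t = deriv (deriv (fun u => w u t)) y := fun _ _ => rfl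
  have pw3 : ∀ t (y : ℝ), px (px (px w)) y t = deriv (deriv (deriv (fun u => w u t))) y :=
    fun _ _ => rfl
  have pz1 : ∀ t (y : ℝ), px z y t = deriv (fun u => z u t) y := fun _ _ => rfl
  have pz2 : ∀ t (y : ℝ), px (px z) y t = deriv (deriv (fun u => z u t)) y := fun _ _ => rfl
  have pz3 : ∀ t (y : ℝ), px (px (px z)) y t = deriv (deriv (deriv (fun u => z u t))) y :=
    fun _ _ => rfl
  have hflux : ∀ t, (fun y => flux38a w z y t) = (fun y =>
      12 * w y t * deriv (fun u => w u t) y * z y t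
        + 2 * w y t * deriv (deriv (fun u => w u t)) y
        + 6 * w y t * z y t * deriv (fun u => z u t) y
        - 3 * w y t * deriv (deriv (fun u => z u t)) y
        + 18 * (w y t)^2 * (z y t)^2 - 12 * (w y t)^2 * deriv (fun u => z u t) y
        - 12 * (w y t)^4
        - 6 * deriv (fun u => w u t) y * (z y t)^2
        + 3 * deriv (fun u => w u t) y * deriv (fun u => z u t) y
        - (deriv (fun u => w u t) y)^2
        - 3 * deriv (deriv (fun u => w u t)) y * z y t
        + 4 * z y t * deriv (deriv (fun u => z u t)) y
        - 6 * (z y t)^4 - 2 * (deriv (fun u => z u t) y)^2) := fun _ => rfl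
  have hderivK : ∀ t x, HasDerivAt (fun y => flux38a w z y t)
      ((fun u => w u t) x * (2 * deriv (deriv (deriv (fun u => w u t))) x
        - 3 * deriv (deriv (deriv (fun u => z u t))) x
        - 12 * (fun u => w u t) x * deriv (deriv (fun u => z u t)) x
        + 6 * (fun u => z u t) x * deriv (deriv (fun u => z u t)) x
        - 12 * deriv (fun u => w u t) x * deriv (fun u => z u t) x
        - 48 * ((fun u => w u t) x)^2 * deriv (fun u => w u t) x
        + 12 * ((fun u => z u t) x)^2 * deriv (fun u => w u t) x
        + 24 * (fun u => w u t) x * (fun u => z u t) x * deriv (fun u => z u t) x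
        + 6 * (deriv (fun u => z u t) x)^2)
      - (fun u => z u t) x * (3 * deriv (deriv (deriv (fun u => w u t))) x
        - 4 * deriv (deriv (deriv (fun u => z u t))) x
        - 12 * (fun u => w u t) x * deriv (deriv (fun u => w u t)) x
        + 6 * (fun u => z u t) x * deriv (deriv (fun u => w u t)) x
        - 12 * (deriv (fun u => w u t) x)^2
        + 6 * deriv (fun u => w u t) x * deriv (fun u => z u t) x
        - 24 * (fun u => z u t) x * (fun u => w u t) x * deriv (fun u => w u t) x
        - 12 * ((fun u => w u t) x)^2 * deriv (fun u => z u t) x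
        + 24 * ((fun u => z u t) x)^2 * deriv (fun u => z u t) x)) x := by
    intro t x
    rw [hflux t]
    exact key_flux_deriv (fun u => w u t) (fun u => z u t) (ha t) (hb t) x
  have part1 : ∀ x t, pt (fun y s => ((w y s)^2 - (z y s)^2) / 2) x t
      = px (flux38a w z) x t := by
    intro x t
    have Hw : HasDerivAt (fun s => w x s) (pt w x t) t :=
      ((hat x).differentiable (by simp) t).hasDerivAt
    have Hz : HasDerivAt (fun s => z x s) (pt z x t) t :=
      ((hbt x).differentiable (by simp) t).hasDerivAt
    have hL : pt (fun y s => ((w y s)^2 - (z y s)^2) / 2) x t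
        = ((2:ℕ) * w x t ^ (2-1) * pt w x t - (2:ℕ) * z x t ^ (2-1) * pt z x t) / 2 :=
      (((Hw.pow 2).sub (Hz.pow 2)).div_const 2).deriv
    have hR : px (flux38a w z) x t = _ := (hderivK t x).deriv
    rw [hL, hR, heqw, heqz]
    simp only [pw1, pw2, pw3, pz1, pz2, pz3]
    push_cast
    ring
  refine ⟨part1, fun t => ?_⟩
  rw [(hdiff t).deriv]
  have hcongr : (fun x => pt (fun y s => ((w y s)^2 - (z y s)^2) / 2) x t)
      =ᵐ[volume] (fun x => px (flux38a w z) x t) :=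
    Eventually.of_forall fun x => part1 x t
  rw [integral_congr_ae hcongr]
  have hderiv : ∀ x, HasDerivAt (fun y => flux38a w z y t) (px (flux38a w z) x t) x := by
    intro x
    have K := hderivK t x
    have : px (flux38a w z) x t = _ := K.deriv
    rw [this]
    exact K
  have hf' : Integrable (fun x => px (flux38a w z) x t) :=
    (hint' t).congr hcongr
  have := integral_of_hasDerivAt_of_tendsto hderiv hf' (hdecayBot t) (hdecayTop t)
  simpa using this
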